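/- Nonstationary exact solution with α = d₁ + d₂: Let d₁, d₂ be real and d₃ ≠ 0 with d₁ + d₂ ≠ 2d₃, let C₂ be a real constant and F : ℝ → ℝ any differentiable function, and set α = d₁ + d₂. Then the functions u = 1/t − 2(d₁ − d₂)/(x²+y²), v = 1/t + 2(d₁ − d₂)/(x²+y²), w = C₂·exp(−(x²+y²)/(4d₃t))·t^{(d₁+d₂−2d₃)/(2d₃)}·(x²+y²)^{−(d₁+d₂)/(2d₃)} − 2(d₁ − d₂)²/((d₁ + d₂ − 2d₃)(x²+y²)) − 1/t satisfy system (3-1) at every point (t,x,y) with t > 0 and (x,y) ≠ (0,0). -/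

import Mathlib

/-- Partial derivative with respect to `t` of a function of `(t,x,y)`. -/
noncomputable def pdT (f : ℝ × ℝ × ℝ → ℝ) (p : ℝ × ℝ × ℝ) : ℝ := fderiv ℝ f p (1, 0, 0)
/-- Partial derivative with respect to `x`. -/
noncomputable def pdX (f : ℝ × ℝ × ℝ → ℝ) (p : ℝ × ℝ × ℝ) : ℝ := fderiv ℝ f p (0, 1, 0)
/-- Partial derivative with respect to `y`. -/
noncomputable def pdY (f : ℝ × ℝ × ℝ → ℝ) (p : ℝ × ℝ × ℝ) : ℝ := fderiv ℝ f p (0, 0, 1)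

/-- `(u,v,w)` solves system (3-1), the convective Lotka–Volterra system (`k = 1`)
whose stream function is `Ψ = F(x²+y²) + α·arctan(x/y)`; here `F'` denotes the
derivative of `F`. -/
def Solves31 (α d₁ d₂ d₃ : ℝ) (F' : ℝ → ℝ) (u v w : ℝ × ℝ × ℝ → ℝ)
    (Ω : Set (ℝ × ℝ × ℝ)) : Prop :=
  ∀ p ∈ Ω,
    (pdT u p - α * (p.2.1 * pdX u p + p.2.2 * pdY u p) / (p.2.1 ^ 2 + p.2.2 ^ 2)
        + 2 * F' (p.2.1 ^ 2 + p.2.2 ^ 2) * (p.2.1 * pdY u p - p.2.2 * pdX u p)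
      = d₁ * (pdX (pdX u) p + pdY (pdY u) p) - u p * v p) ∧
    (pdT v p - α * (p.2.1 * pdX v p + p.2.2 * pdY v p) / (p.2.1 ^ 2 + p.2.2 ^ 2)
        + 2 * F' (p.2.1 ^ 2 + p.2.2 ^ 2) * (p.2.1 * pdY v p - p.2.2 * pdX v p)
      = d₂ * (pdX (pdX v) p + pdY (pdY v) p) - u p * v p) ∧
    (pdT w p - α * (p.2.1 * pdX w p + p.2.2 * pdY w p) / (p.2.1 ^ 2 + p.2.2 ^ 2)
        + 2 * F' (p.2.1 ^ 2 + p.2.2 ^ 2) * (p.2.1 * pdY w p - p.2.2 * pdX w p)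
      = d₃ * (pdX (pdX w) p + pdY (pdY w) p) + u p * v p)

/-! All three functions are radial, `f (t, x, y) = g (t, s)` with `s = x² + y²`. For such `f`
the convective term `x f_y - y f_x` vanishes, `x f_x + y f_y = 2 s g_s` and
`Δf = 4 (g_s + s g_ss)`, so every equation of (3-1) becomes an identity in `(t, s)` for the
operator `g_t - 2 α g_s - 4 d (g_s + s g_ss)`. On `a / t + c / s` this operator takes the
value `-a / t² + 2 (α - 2d) c / s²`, and it annihilates
`exp (-s / (4 d t)) t ^ (α / (2d) - 1) s ^ (-α / (2d))`; comparing with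
`u v = 1 / t² - 4 (d₁ - d₂)² / s²` finishes the proof. -/

open ContinuousLinearMap Filter Topology

noncomputable def gradCLM (a b : ℝ) : ℝ × ℝ →L[ℝ] ℝ := a • fst ℝ ℝ ℝ + b • snd ℝ ℝ ℝ

@[simp]
lemma gradCLM_apply (a b : ℝ) (v : ℝ × ℝ) : gradCLM a b v = a * v.1 + b * v.2 := by
  simp [gradCLM]

def radialCoords (p : ℝ × ℝ × ℝ) : ℝ × ℝ := (p.1, p.2.1 ^ 2 + p.2.2 ^ 2)

lemma continuous_radialCoords : Continuous radialCoords := by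
  unfold radialCoords; fun_prop

lemma hasFDerivAt_radialCoords (p : ℝ × ℝ × ℝ) :
    HasFDerivAt radialCoords ((fst ℝ ℝ (ℝ × ℝ)).prod
      ((2 * p.2.1) • (fst ℝ ℝ ℝ).comp (snd ℝ ℝ (ℝ × ℝ))
        + (2 * p.2.2) • (snd ℝ ℝ ℝ).comp (snd ℝ ℝ (ℝ × ℝ)))) p := by
  have hx := (hasFDerivAt_snd (𝕜 := ℝ) (p := p)).fst
  have hy := (hasFDerivAt_snd (𝕜 := ℝ) (p := p)).snd
  refine (hasFDerivAt_fst.prodMk ((hx.pow 2).add (hy.pow 2))).congr_fderiv ?_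
  ext <;> simp

lemma radialCoords_snd_ne_zero {p : ℝ × ℝ × ℝ} (hp : p.2 ≠ 0) : (radialCoords p).2 ≠ 0 := by
  contrapose! hp
  obtain ⟨hx, hy⟩ := (add_eq_zero_iff_of_nonneg (sq_nonneg _) (sq_nonneg _)).1 hp
  exact Prod.ext (pow_eq_zero_iff two_ne_zero |>.1 hx) (pow_eq_zero_iff two_ne_zero |>.1 hy)

noncomputable def advectionDiffusionOp (α d : ℝ) (F' : ℝ → ℝ) (f : ℝ × ℝ × ℝ → ℝ)
    (p : ℝ × ℝ × ℝ) : ℝ :=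
  pdT f p - α * (p.2.1 * pdX f p + p.2.2 * pdY f p) / (p.2.1 ^ 2 + p.2.2 ^ 2)
    + 2 * F' (p.2.1 ^ 2 + p.2.2 ^ 2) * (p.2.1 * pdY f p - p.2.2 * pdX f p)
    - d * (pdX (pdX f) p + pdY (pdY f) p)

lemma solves31_iff {α d₁ d₂ d₃ : ℝ} {F' : ℝ → ℝ} {u v w : ℝ × ℝ × ℝ → ℝ}
    {Ω : Set (ℝ × ℝ × ℝ)} :
    Solves31 α d₁ d₂ d₃ F' u v w Ω ↔ ∀ p ∈ Ω,
      advectionDiffusionOp α d₁ F' u p = -(u p * v p) ∧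
      advectionDiffusionOp α d₂ F' v p = -(u p * v p) ∧
      advectionDiffusionOp α d₃ F' w p = u p * v p := by
  refine forall₂_congr fun p _ => ?_
  simp only [advectionDiffusionOp]
  constructor <;> rintro ⟨h₁, h₂, h₃⟩ <;> exact ⟨by linarith, by linarith, by linarith⟩

section Radial

variable {g gt gs : ℝ × ℝ → ℝ} {p : ℝ × ℝ × ℝ}

lemma fderiv_comp_radialCoords_apply {a b : ℝ}
    (hg : HasFDerivAt g (gradCLM a b) (radialCoords p)) (v : ℝ × ℝ × ℝ) :
    fderiv ℝ (g ∘ radialCoords) p v = a * v.1 + 2 * (p.2.1 * v.2.1 + p.2.2 * v.2.2) * b := by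
  rw [(hg.comp p (hasFDerivAt_radialCoords p)).fderiv]
  simp
  ring

lemma fderiv_fderiv_comp_radialCoords_apply {gst gss : ℝ}
    (hg : ∀ᶠ q in 𝓝 (radialCoords p), HasFDerivAt g (gradCLM (gt q) (gs q)) q)
    (hgs : HasFDerivAt gs (gradCLM gst gss) (radialCoords p))
    (v : ℝ × ℝ × ℝ) (hv : v.1 = 0) :
    fderiv ℝ (fun q => fderiv ℝ (g ∘ radialCoords) q v) p v
      = 2 * (v.2.1 ^ 2 + v.2.2 ^ 2) * gs (radialCoords p)
        + 4 * (p.2.1 * v.2.1 + p.2.2 * v.2.2) ^ 2 * gss := by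
  have hev : (fun q => fderiv ℝ (g ∘ radialCoords) q v)
      =ᶠ[𝓝 p] fun q => 2 * (q.2.1 * v.2.1 + q.2.2 * v.2.2) * gs (radialCoords q) :=
    (continuous_radialCoords.continuousAt.eventually hg).mono fun q hq => by
      simp only [fderiv_comp_radialCoords_apply hq, hv]; ring
  have hσ := hasFDerivAt_radialCoords p
  have hlin : HasFDerivAt (fun q : ℝ × ℝ × ℝ => 2 * (q.2.1 * v.2.1 + q.2.2 * v.2.2)) _ p :=
    ((((hasFDerivAt_snd (𝕜 := ℝ) (p := p)).fst).mul_const v.2.1).add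
      (((hasFDerivAt_snd (𝕜 := ℝ) (p := p)).snd).mul_const v.2.2)).const_mul 2
  have hprod : HasFDerivAt (fun q => 2 * (q.2.1 * v.2.1 + q.2.2 * v.2.2) * gs (radialCoords q))
      _ p := hlin.mul (hgs.comp p hσ)
  rw [hev.fderiv_eq, hprod.fderiv]
  simp [hv]
  ring

lemma advectionDiffusionOp_of_radial (α d : ℝ) (F' : ℝ → ℝ) {f : ℝ × ℝ × ℝ → ℝ}
    {gst gss : ℝ} (hp : p.2 ≠ 0)
    (hg : ∀ᶠ q in 𝓝 (radialCoords p), HasFDerivAt g (gradCLM (gt q) (gs q)) q)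
    (hgs : HasFDerivAt gs (gradCLM gst gss) (radialCoords p))
    (hf : ∀ q, f q = g (radialCoords q)) :
    advectionDiffusionOp α d F' f p = gt (radialCoords p) - 2 * α * gs (radialCoords p)
      - 4 * d * (gs (radialCoords p) + (p.2.1 ^ 2 + p.2.2 ^ 2) * gss) := by
  obtain rfl : f = g ∘ radialCoords := funext hf
  have hs : p.2.1 ^ 2 + p.2.2 ^ 2 ≠ 0 := radialCoords_snd_ne_zero hp
  have hxx : pdX (pdX (g ∘ radialCoords)) p = _ :=
    fderiv_fderiv_comp_radialCoords_apply hg hgs (0, 1, 0) rfl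
  have hyy : pdY (pdY (g ∘ radialCoords)) p = _ :=
    fderiv_fderiv_comp_radialCoords_apply hg hgs (0, 0, 1) rfl
  rw [advectionDiffusionOp, hxx, hyy]
  simp only [pdT, pdX, pdY, fderiv_comp_radialCoords_apply hg.self_of_nhds]
  field_simp
  ring

end Radial

noncomputable def ratProfile (a c : ℝ) (q : ℝ × ℝ) : ℝ := a / q.1 + c / q.2

noncomputable def heatProfile (e a b : ℝ) (q : ℝ × ℝ) : ℝ :=
  Real.exp (-q.2 / (e * q.1)) * q.1 ^ a * q.2 ^ b

section Profiles

variable {q : ℝ × ℝ}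

lemma hasFDerivAt_ratProfile (a c : ℝ) (h₁ : q.1 ≠ 0) (h₂ : q.2 ≠ 0) :
    HasFDerivAt (ratProfile a c) (gradCLM (-a / q.1 ^ 2) (-c / q.2 ^ 2)) q := by
  have ht : HasFDerivAt (fun q : ℝ × ℝ => a / q.1) _ q :=
    ((hasDerivAt_const q.1 a).div (hasDerivAt_id' q.1) h₁).comp_hasFDerivAt q
      (hasFDerivAt_fst (𝕜 := ℝ))
  have hs : HasFDerivAt (fun q : ℝ × ℝ => c / q.2) _ q :=
    ((hasDerivAt_const q.2 c).div (hasDerivAt_id' q.2) h₂).comp_hasFDerivAt q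
      (hasFDerivAt_snd (𝕜 := ℝ))
  refine (ht.add hs).congr_fderiv ?_
  ext <;> simp

lemma hasFDerivAt_div_sq_snd (c : ℝ) (h₂ : q.2 ≠ 0) :
    HasFDerivAt (fun q : ℝ × ℝ => c / q.2 ^ 2) (gradCLM 0 (-2 * c / q.2 ^ 3)) q := by
  have hs : HasFDerivAt (fun q : ℝ × ℝ => c / q.2 ^ 2) _ q :=
    ((hasDerivAt_const q.2 c).div (hasDerivAt_pow 2 q.2) (pow_ne_zero 2 h₂)).comp_hasFDerivAt
      q (hasFDerivAt_snd (𝕜 := ℝ))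
  refine hs.congr_fderiv ?_
  ext <;> simp
  field_simp

lemma hasFDerivAt_heatProfile (e a b : ℝ) (he : e ≠ 0) (h₁ : q.1 ≠ 0) (h₂ : q.2 ≠ 0) :
    HasFDerivAt (heatProfile e a b)
      (gradCLM (heatProfile e a b q * (q.2 / (e * q.1 ^ 2) + a / q.1))
        (heatProfile e a b q * ratProfile (-e⁻¹) b q)) q := by
  have hinv : HasFDerivAt (fun q : ℝ × ℝ => (e * q.1)⁻¹) _ q :=
    (((hasDerivAt_id' q.1).const_mul e).inv (mul_ne_zero he h₁)).comp_hasFDerivAt q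
      (hasFDerivAt_fst (𝕜 := ℝ))
  have hE : HasFDerivAt (fun q : ℝ × ℝ => -q.2 / (e * q.1)) _ q :=
    (hasFDerivAt_snd (𝕜 := ℝ)).neg.mul hinv
  have H : HasFDerivAt (heatProfile e a b) _ q :=
    (hE.exp.mul ((hasFDerivAt_fst (𝕜 := ℝ)).rpow_const (p := a) (Or.inl h₁))).mul
      ((hasFDerivAt_snd (𝕜 := ℝ)).rpow_const (p := b) (Or.inl h₂))
  refine H.congr_fderiv ?_
  ext <;> simp [heatProfile, ratProfile, Real.rpow_sub_one h₁, Real.rpow_sub_one h₂] <;>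
    field_simp <;> ring

lemma HasFDerivAt.const_mul_add_gradCLM {f g : ℝ × ℝ → ℝ} {a b a' b' : ℝ} (C : ℝ)
    (hf : HasFDerivAt f (gradCLM a b) q) (hg : HasFDerivAt g (gradCLM a' b') q) :
    HasFDerivAt (fun q => C * f q + g q) (gradCLM (C * a + a') (C * b + b')) q := by
  refine ((hf.const_mul C).add hg).congr_fderiv ?_
  ext <;> simp

lemma hasFDerivAt_heatProfile_mul_ratProfile (e a b : ℝ) (he : e ≠ 0) (h₁ : q.1 ≠ 0)
    (h₂ : q.2 ≠ 0) :
    HasFDerivAt (fun q => heatProfile e a b q * ratProfile (-e⁻¹) b q)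
      (gradCLM
        (heatProfile e a b q * ((q.2 / (e * q.1 ^ 2) + a / q.1) * ratProfile (-e⁻¹) b q
          + e⁻¹ / q.1 ^ 2))
        (heatProfile e a b q * (ratProfile (-e⁻¹) b q ^ 2 - b / q.2 ^ 2))) q := by
  refine ((hasFDerivAt_heatProfile e a b he h₁ h₂).mul
    (hasFDerivAt_ratProfile (-e⁻¹) b h₁ h₂)).congr_fderiv ?_
  ext <;> simp <;> ring

end Profiles

lemma eventually_fst_ne_zero_and_snd_ne_zero {q₀ : ℝ × ℝ} (h₁ : q₀.1 ≠ 0) (h₂ : q₀.2 ≠ 0) :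
    ∀ᶠ q in 𝓝 q₀, q.1 ≠ 0 ∧ q.2 ≠ 0 :=
  (continuous_fst.continuousAt.eventually_ne h₁).and
    (continuous_snd.continuousAt.eventually_ne h₂)

section RadialSolutions

variable (α d : ℝ) (F' : ℝ → ℝ) {f : ℝ × ℝ × ℝ → ℝ} {p : ℝ × ℝ × ℝ}

lemma advectionDiffusionOp_ratProfile (a c : ℝ) (ht : p.1 ≠ 0) (hp : p.2 ≠ 0)
    (hf : ∀ q, f q = ratProfile a c (radialCoords q)) :
    advectionDiffusionOp α d F' f p
      = -a / p.1 ^ 2 + 2 * (α - 2 * d) * c / (p.2.1 ^ 2 + p.2.2 ^ 2) ^ 2 := by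
  have hs := radialCoords_snd_ne_zero hp
  rw [advectionDiffusionOp_of_radial α d F' hp
    ((eventually_fst_ne_zero_and_snd_ne_zero ht hs).mono fun q hq =>
      hasFDerivAt_ratProfile a c hq.1 hq.2)
    (hasFDerivAt_div_sq_snd (-c) hs) hf]
  simp only [radialCoords] at hs ⊢
  field_simp
  ring

lemma advectionDiffusionOp_heatProfile_add_ratProfile (C a c : ℝ) (hd : d ≠ 0)
    (ht : p.1 ≠ 0) (hp : p.2 ≠ 0)
    (hf : ∀ q, f q = C * heatProfile (4 * d) ((α - 2 * d) / (2 * d)) (-(α / (2 * d)))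
      (radialCoords q) + ratProfile a c (radialCoords q)) :
    advectionDiffusionOp α d F' f p
      = -a / p.1 ^ 2 + 2 * (α - 2 * d) * c / (p.2.1 ^ 2 + p.2.2 ^ 2) ^ 2 := by
  have hs := radialCoords_snd_ne_zero hp
  have he : 4 * d ≠ 0 := mul_ne_zero four_ne_zero hd
  rw [advectionDiffusionOp_of_radial α d F' hp
    ((eventually_fst_ne_zero_and_snd_ne_zero ht hs).mono fun q hq =>
      (hasFDerivAt_heatProfile _ _ _ he hq.1 hq.2).const_mul_add_gradCLM C
        (hasFDerivAt_ratProfile a c hq.1 hq.2))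
    ((hasFDerivAt_heatProfile_mul_ratProfile _ _ _ he ht hs).const_mul_add_gradCLM C
      (hasFDerivAt_div_sq_snd (-c) hs)) hf]
  simp only [radialCoords, ratProfile] at hs ⊢
  field_simp
  ring

end RadialSolutions

theorem nonstationary_solution_alpha_d1_plus_d2_general
    (d₁ d₂ d₃ C₂ : ℝ) (hd₃ : d₃ ≠ 0) (hsum : d₁ + d₂ ≠ 2 * d₃)
    (F : ℝ → ℝ) :
    Solves31 (d₁ + d₂) d₁ d₂ d₃ (deriv F)
      (fun p => 1 / p.1 - 2 * (d₁ - d₂) / (p.2.1 ^ 2 + p.2.2 ^ 2))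
      (fun p => 1 / p.1 + 2 * (d₁ - d₂) / (p.2.1 ^ 2 + p.2.2 ^ 2))
      (fun p => C₂ * Real.exp (-(p.2.1 ^ 2 + p.2.2 ^ 2) / (4 * d₃ * p.1))
          * p.1 ^ ((d₁ + d₂ - 2 * d₃) / (2 * d₃))
          * (p.2.1 ^ 2 + p.2.2 ^ 2) ^ (-((d₁ + d₂) / (2 * d₃)))
        - 2 * (d₁ - d₂) ^ 2 / ((d₁ + d₂ - 2 * d₃) * (p.2.1 ^ 2 + p.2.2 ^ 2))
        - 1 / p.1)
      {p : ℝ × ℝ × ℝ | 0 < p.1 ∧ p.2 ≠ 0} := by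
  have hκ : d₁ + d₂ - 2 * d₃ ≠ 0 := sub_ne_zero.mpr hsum
  rw [solves31_iff]
  rintro p ⟨ht, hp⟩
  have hs : p.2.1 ^ 2 + p.2.2 ^ 2 ≠ 0 := radialCoords_snd_ne_zero hp
  refine ⟨?_, ?_, ?_⟩
  · refine (advectionDiffusionOp_ratProfile _ _ _ 1 (-(2 * (d₁ - d₂))) ht.ne' hp
      fun q => ?_).trans ?_
    · simp only [ratProfile, radialCoords]
      ring
    · field_simp
      ring
  · refine (advectionDiffusionOp_ratProfile _ _ _ 1 (2 * (d₁ - d₂)) ht.ne' hp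
      fun q => rfl).trans ?_
    field_simp
    ring
  · refine (advectionDiffusionOp_heatProfile_add_ratProfile _ _ _ C₂ (-1)
      (-(2 * (d₁ - d₂) ^ 2 / (d₁ + d₂ - 2 * d₃))) hd₃ ht.ne' hp fun q => ?_).trans ?_
    · simp only [heatProfile, ratProfile, radialCoords, div_eq_mul_inv, mul_inv]
      ring
    · field_simp
      ring

/-- Nonstationary exact solution with `α = d₁ + d₂` (and `d₁ + d₂ ≠ 2d₃`):
`u = 1/t − 2(d₁−d₂)/(x²+y²)`, `v = 1/t + 2(d₁−d₂)/(x²+y²)`,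
`w = C₂·exp(−(x²+y²)/(4d₃t))·t^{(d₁+d₂−2d₃)/(2d₃)}·(x²+y²)^{−(d₁+d₂)/(2d₃)}
     − 2(d₁−d₂)²/((d₁+d₂−2d₃)(x²+y²)) − 1/t`
solve system (3-1) with `α = d₁ + d₂` for `t > 0`, `(x,y) ≠ (0,0)`. -/
theorem nonstationary_solution_alpha_d1_plus_d2
    (d₁ d₂ d₃ C₂ : ℝ) (hd₃ : d₃ ≠ 0) (hsum : d₁ + d₂ ≠ 2 * d₃)
    (F : ℝ → ℝ) (hF : Differentiable ℝ F) :
    Solves31 (d₁ + d₂) d₁ d₂ d₃ (deriv F)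
      (fun p => 1 / p.1 - 2 * (d₁ - d₂) / (p.2.1 ^ 2 + p.2.2 ^ 2))
      (fun p => 1 / p.1 + 2 * (d₁ - d₂) / (p.2.1 ^ 2 + p.2.2 ^ 2))
      (fun p => C₂ * Real.exp (-(p.2.1 ^ 2 + p.2.2 ^ 2) / (4 * d₃ * p.1))
          * p.1 ^ ((d₁ + d₂ - 2 * d₃) / (2 * d₃))
          * (p.2.1 ^ 2 + p.2.2 ^ 2) ^ (-((d₁ + d₂) / (2 * d₃)))
        - 2 * (d₁ - d₂) ^ 2 / ((d₁ + d₂ - 2 * d₃) * (p.2.1 ^ 2 + p.2.2 ^ 2))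
        - 1 / p.1)
      {p : ℝ × ℝ × ℝ | 0 < p.1 ∧ p.2 ≠ 0} :=
  nonstationary_solution_alpha_d1_plus_d2_general d₁ d₂ d₃ C₂ hd₃ hsum F
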